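/- For any nonzero a, b ∈ ℝ² with a + b ≠ 0, one has Λ(a) + Λ(b) - Λ(a+b) > 0, where Λ(v) = |v|·√((2+|v|²)/(1+|v|²)). -/
import Mathlib


noncomputable def Lam (v : EuclideanSpace ℝ (Fin 2)) : ℝ :=
  ‖v‖ * Real.sqrt ((2 + ‖v‖ ^ 2) / (1 + ‖v‖ ^ 2))

namespace Stmt8Aux

noncomputable def F (r : ℝ) : ℝ := Real.sqrt (r ^ 2 + r ^ 2 / (1 + r ^ 2))

noncomputable def h (t : ℝ) : ℝ := t / Real.sqrt (1 + t ^ 2)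

lemma one_add_sq_pos (r : ℝ) : (0:ℝ) < 1 + r ^ 2 := by positivity

lemma F_eq (r : ℝ) (hr : 0 ≤ r) :
    r * Real.sqrt ((2 + r ^ 2) / (1 + r ^ 2)) = F r := by
  rw [F, ← Real.sqrt_sq hr, ← Real.sqrt_mul (sq_nonneg r), Real.sqrt_sq hr]
  congr 1
  field_simp
  ring

lemma Fsq (r : ℝ) : F r ^ 2 = r ^ 2 + r ^ 2 / (1 + r ^ 2) :=
  Real.sq_sqrt (by positivity)

lemma F_nonneg (r : ℝ) : 0 ≤ F r := Real.sqrt_nonneg _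

lemma h_nonneg (t : ℝ) (ht : 0 ≤ t) : 0 ≤ h t := by
  unfold h; positivity

lemma hsq (t : ℝ) : h t ^ 2 = t ^ 2 / (1 + t ^ 2) := by
  rw [h, div_pow, Real.sq_sqrt (one_add_sq_pos t).le]

lemma F_mono {z s : ℝ} (hz : 0 ≤ z) (hzs : z ≤ s) : F z ≤ F s := by
  apply Real.sqrt_le_sqrt
  have hzz : z ^ 2 ≤ s ^ 2 := by nlinarith
  have hdiv : z ^ 2 / (1 + z ^ 2) ≤ s ^ 2 / (1 + s ^ 2) := by
    rw [div_le_div_iff₀ (one_add_sq_pos z) (one_add_sq_pos s)]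
    nlinarith
  linarith

/-- Cauchy–Schwarz step: F x * F y ≥ x*y + h x * h y. -/
lemma cs (x y : ℝ) (hx : 0 ≤ x) (hy : 0 ≤ y) :
    x * y + h x * h y ≤ F x * F y := by
  have hrhs : 0 ≤ x * y + h x * h y := by
    have h1 := h_nonneg x hx; have h2 := h_nonneg y hy; positivity
  have hFxy : F x * F y =
      Real.sqrt ((x ^ 2 + x ^ 2 / (1 + x ^ 2)) * (y ^ 2 + y ^ 2 / (1 + y ^ 2))) := by
    rw [F, F, ← Real.sqrt_mul (by positivity)]
  rw [hFxy, ← Real.sqrt_sq hrhs]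
  apply Real.sqrt_le_sqrt
  rw [← hsq x, ← hsq y]
  nlinarith [sq_nonneg (x * h y - y * h x)]

lemma h_subadd {x y : ℝ} (hx : 0 < x) (hy : 0 < y) : h (x + y) < h x + h y := by
  have hS : Real.sqrt (1 + x ^ 2) < Real.sqrt (1 + (x + y) ^ 2) := by
    apply Real.sqrt_lt_sqrt (by positivity)
    nlinarith
  have hS' : Real.sqrt (1 + y ^ 2) < Real.sqrt (1 + (x + y) ^ 2) := by
    apply Real.sqrt_lt_sqrt (by positivity)
    nlinarith
  have hp : 0 < Real.sqrt (1 + x ^ 2) := Real.sqrt_pos.mpr (one_add_sq_pos x)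
  have hp' : 0 < Real.sqrt (1 + y ^ 2) := Real.sqrt_pos.mpr (one_add_sq_pos y)
  have e : h (x + y) = x / Real.sqrt (1 + (x + y) ^ 2) + y / Real.sqrt (1 + (x + y) ^ 2) := by
    rw [h, add_div]
  rw [e, h, h]
  have l1 : x / Real.sqrt (1 + (x + y) ^ 2) < x / Real.sqrt (1 + x ^ 2) :=
    div_lt_div_of_pos_left hx hp hS
  have l2 : y / Real.sqrt (1 + (x + y) ^ 2) < y / Real.sqrt (1 + y ^ 2) :=
    div_lt_div_of_pos_left hy hp' hS'
  linarith

lemma F_subadd {x y : ℝ} (hx : 0 < x) (hy : 0 < y) : F (x + y) < F x + F y := by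
  have e1 : F (x + y) ^ 2 = (x + y) ^ 2 + h (x + y) ^ 2 := by rw [Fsq, hsq]
  have e2 : F x ^ 2 = x ^ 2 + h x ^ 2 := by rw [Fsq, hsq]
  have e3 : F y ^ 2 = y ^ 2 + h y ^ 2 := by rw [Fsq, hsq]
  have hcs := cs x y hx.le hy.le
  have hsub := h_subadd hx hy
  have hne : 0 ≤ h (x + y) := h_nonneg _ (by positivity)
  have hsq2 : h (x + y) ^ 2 < (h x + h y) ^ 2 := by
    apply pow_lt_pow_left₀ hsub hne (by norm_num)
  apply lt_of_pow_lt_pow_left₀ 2 (add_nonneg (F_nonneg x) (F_nonneg y))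
  nlinarith [hcs, hsq2, e1, e2, e3]

end Stmt8Aux

theorem stmt_8 : ∀ a b : EuclideanSpace ℝ (Fin 2), a ≠ 0 → b ≠ 0 → a + b ≠ 0 →
    0 < Lam a + Lam b - Lam (a + b) := by
  intro a b ha hb hab
  have hx : 0 < ‖a‖ := norm_pos_iff.mpr ha
  have hy : 0 < ‖b‖ := norm_pos_iff.mpr hb
  have h1 : Stmt8Aux.F ‖a + b‖ ≤ Stmt8Aux.F (‖a‖ + ‖b‖) :=
    Stmt8Aux.F_mono (norm_nonneg _) (norm_add_le a b)
  have h2 := Stmt8Aux.F_subadd hx hy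
  unfold Lam
  rw [Stmt8Aux.F_eq _ (norm_nonneg a), Stmt8Aux.F_eq _ (norm_nonneg b),
    Stmt8Aux.F_eq _ (norm_nonneg (a + b))]
  linarith
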